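/- arXiv:2508.21280 — 7 statements merged into one kernel-verified Lean document; each statement's English description precedes it below -/
import Mathlib

section
/- Let s be a binary string of length l, s^{(1)} its expansion, and let x_1 < ... < x_k be a monochromatic D-diffsequence in {1,...,4l} of color c ∈ {0,1} under s^{(1)} (i.e., s^{(1)}_{x_i} = c for all i). Then there exists a nonnegative integer m ≤ k such that for every j ∈ {1,...,k}, s_{pos(x_j)} = 1 - c if and only if j ≤ m. -/
/-- The set of powers of two. -/
def D : Set ℕ := {d | ∃ i : ℕ, d = 2 ^ i}

/-- `pos i = ⌈i / 4⌉`. -/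
def pos (i : ℕ) : ℕ := (i + 3) / 4

/-- The expansion of a binary string: each `0` becomes `0011`, each `1` becomes `1100`.
For `1 ≤ m`, `s⁽¹⁾_m = s_{⌈m/4⌉}` if `m % 4 ∈ {1,2}` and `1 - s_{⌈m/4⌉}` otherwise. -/
def expand (s : ℕ → Fin 2) : ℕ → Fin 2 :=
  fun m => if m % 4 = 1 ∨ m % 4 = 2 then s (pos m) else 1 - s (pos m)

/-- `a 0 < a 1 < ⋯ < a (k-1)` is a `D`-diffsequence contained in `{1, …, n}`. -/
def IsDiffseqIn (n k : ℕ) (a : ℕ → ℕ) : Prop :=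
  (∀ i < k, 1 ≤ a i ∧ a i ≤ n) ∧
    ∀ i, i + 1 < k → a i < a (i + 1) ∧ a (i + 1) - a i ∈ D

/-- The set of hops of a length-`k` diffsequence `a` with respect to the string `s`:
indices `j` (0-based) with `a (j+1) - a j = 1` and `s (a (j+1)) ≠ s (a j)`. -/
def hops (s : ℕ → Fin 2) (k : ℕ) (a : ℕ → ℕ) : Finset ℕ :=
  (Finset.range (k - 1)).filter fun j => a (j + 1) = a j + 1 ∧ s (a (j + 1)) ≠ s (a j)

/-- `psi s n h` : the maximum length of a `D`-diffsequence contained in `{1, …, n}`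
with at most `h` hops with respect to `s` (0 if there is none). -/
noncomputable def psi (s : ℕ → Fin 2) (n h : ℕ) : ℕ :=
  sSup {k | ∃ a : ℕ → ℕ, IsDiffseqIn n k a ∧ (hops s k a).card ≤ h}


/-!
Call a position `m` *leading* if `m % 4 ∈ {1, 2}`, i.e. it lies in the first half of its block,
where `s⁽¹⁾` copies the bit of `s`. In a monochromatic `D`-diffsequence of colour `c`, a term
reads `s_{pos}` as `c` exactly when it is leading. A step of length `≥ 4` keeps the residue mod 4,
and a step of length `1` or `2` from a leading position either stays leading or lands in the
second half of the same block, where the colour is flipped. So once the terms become leading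
they stay leading, and the terms with `s_{pos} = 1 - c` form an initial segment.
-/

lemma Fin.two_ne_iff_eq_one_sub {a c : Fin 2} : a ≠ c ↔ a = 1 - c := by
  fin_cases a <;> fin_cases c <;> decide

lemma exists_not_iff_lt_of_succ {k : ℕ} (P : ℕ → Prop) [DecidablePred P]
    (hP : ∀ j, j + 1 < k → P j → P (j + 1)) :
    ∃ m ≤ k, ∀ j < k, (¬P j ↔ j < m) := by
  have hex : ∃ j, j = k ∨ P j := ⟨k, Or.inl rfl⟩
  have hup : ∀ j, Nat.find hex ≤ j → j < k → P j := by
    intro j hle hjk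
    induction j, hle using Nat.le_induction with
    | base => exact (Nat.find_spec hex).resolve_left hjk.ne
    | succ n _ ih => exact hP n hjk (ih (by omega))
  refine ⟨Nat.find hex, Nat.find_le (Or.inl rfl), fun j hj => ⟨fun hnot => ?_, fun hlt => ?_⟩⟩
  · by_contra hge
    exact hnot (hup j (not_lt.mp hge) hj)
  · exact fun hPj => Nat.find_min hex hlt (Or.inr hPj)

lemma pos_bit_eq_one_sub_iff {s : ℕ → Fin 2} {m : ℕ} {c : Fin 2} (h : expand s m = c) :
    s (pos m) = 1 - c ↔ ¬(m % 4 = 1 ∨ m % 4 = 2) := by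
  subst h
  unfold expand
  split_ifs with hm
  · simp only [hm, not_true_eq_false, iff_false]
    exact (Fin.two_ne_iff_eq_one_sub.mpr rfl).symm
  · simp only [hm, not_false_eq_true, sub_sub_cancel]

lemma pos_add_pow_two_eq {m i : ℕ} (hm : m % 4 = 1 ∨ m % 4 = 2)
    (hm' : ¬((m + 2 ^ i) % 4 = 1 ∨ (m + 2 ^ i) % 4 = 2)) :
    pos (m + 2 ^ i) = pos m := by
  have hi : i < 2 := by
    by_contra! hi
    obtain ⟨r, hr⟩ := pow_dvd_pow 2 hi
    omega
  unfold pos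
  interval_cases i <;> omega

lemma mod_four_of_expand_eq {s : ℕ → Fin 2} {m i : ℕ}
    (hexp : expand s (m + 2 ^ i) = expand s m) (hm : m % 4 = 1 ∨ m % 4 = 2) :
    (m + 2 ^ i) % 4 = 1 ∨ (m + 2 ^ i) % 4 = 2 := by
  by_contra hm'
  have hpos := pos_add_pow_two_eq hm hm'
  simp only [expand, if_pos hm, if_neg hm', hpos] at hexp
  exact Fin.two_ne_iff_eq_one_sub.mpr rfl hexp

theorem stmt_2 (l k : ℕ) (s : ℕ → Fin 2) (x : ℕ → ℕ) (c : Fin 2)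
    (hdiff : IsDiffseqIn (4 * l) k x)
    (hmono : ∀ i < k, expand s (x i) = c) :
    ∃ m ≤ k, ∀ j < k, (s (pos (x j)) = 1 - c ↔ j < m) := by
  have hstep : ∀ j, j + 1 < k → (x j % 4 = 1 ∨ x j % 4 = 2) →
      (x (j + 1) % 4 = 1 ∨ x (j + 1) % 4 = 2) := by
    intro j hj hlead
    obtain ⟨hlt, i, hi⟩ := hdiff.2 j hj
    have hx : x (j + 1) = x j + 2 ^ i := by omega
    have hexp := (hmono (j + 1) hj).trans (hmono j (by omega)).symm
    rw [hx] at hexp ⊢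
    exact mod_four_of_expand_eq hexp hlead
  obtain ⟨m, hmk, hm⟩ := exists_not_iff_lt_of_succ _ hstep
  exact ⟨m, hmk, fun j hj => (pos_bit_eq_one_sub_iff (hmono j hj)).trans (hm j hj)⟩
end

section
/- Let s be a binary string of length l, s^{(1)} its expansion, and let x_1 < ... < x_k be a monochromatic D-diffsequence in {1,...,4l} of color c ∈ {0,1} under s^{(1)}. Suppose there exists d ∈ {0,1} such that s_{pos(x_i)} = d for all 1 ≤ i ≤ k. Then the set {pos(x_i) : 1 ≤ i ≤ k} has at least k - 1 distinct elements. -/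
/-! In `s⁽¹⁾` every position lies in the first half (`m % 4 ∈ {1, 2}`) or the second half of
its block of four, and the sequence stays on first halves if `c = d` and on second halves otherwise.
A power of two is `1`, `2` or a multiple of `4`, so each step either stays inside a block, going from
an odd to an even position, or moves to a later block without changing parity. Once the sequence
reaches an even position it stays on even ones, so `pos ∘ x` is monotone and repeats a value at
most once. -/

open Finset

lemma mem_D_cases {n : ℕ} (h : n ∈ D) : n = 1 ∨ n = 2 ∨ 4 ∣ n := by
  obtain ⟨i, rfl⟩ := h
  rcases i with _ | _ | i
  · simp
  · simp
  · exact .inr <| .inr ⟨2 ^ i, by ring⟩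

lemma pos_mono : Monotone pos := fun _ _ h => Nat.div_le_div_right (by omega)

theorem card_le_card_image_add_card_plateaus {α : Type*} [LinearOrder α] (f : ℕ → α) (n : ℕ)
    (hf : MonotoneOn f (Set.Iic n)) :
    n + 1 ≤ #((range (n + 1)).image f) + #{i ∈ range n | f i = f (i + 1)} := by
  induction n with
  | zero => simp
  | succ n ih =>
    have ih := ih (hf.mono (Set.Iic_subset_Iic.2 n.le_succ))
    have himage : (range (n + 2)).image f = insert (f (n + 1)) ((range (n + 1)).image f) := by
      rw [range_add_one, image_insert]
    have hplateaus : {i ∈ range (n + 1) | f i = f (i + 1)} =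
        if f n = f (n + 1) then insert n {i ∈ range n | f i = f (i + 1)}
        else {i ∈ range n | f i = f (i + 1)} := by
      rw [range_add_one, filter_insert]
    rw [himage, hplateaus]
    by_cases hplat : f n = f (n + 1)
    · have hfresh : n ∉ {i ∈ range n | f i = f (i + 1)} := by simp
      rw [if_pos hplat, card_insert_of_notMem hfresh]
      have := card_le_card (subset_insert (f (n + 1)) ((range (n + 1)).image f))
      omega
    · have hnew : f (n + 1) ∉ (range (n + 1)).image f := by
        simp only [mem_image, mem_range, not_exists, not_and]
        intro j hj hfj
        have hle : f j ≤ f n := hf (by simp only [Set.mem_Iic]; omega) (by simp) (by omega)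
        have hlt : f n < f (n + 1) :=
          lt_of_le_of_ne (hf (by simp) (by simp) n.le_succ) hplat
        exact absurd hfj (ne_of_lt (lt_of_le_of_lt hle hlt))
      rw [if_neg hplat, card_insert_of_notMem hnew]
      omega

def FirstHalf (m : ℕ) : Prop := m % 4 = 1 ∨ m % 4 = 2

lemma expand_eq_iff_firstHalf (s : ℕ → Fin 2) (m : ℕ) :
    expand s m = s (pos m) ↔ FirstHalf m := by
  have hflip : ∀ v : Fin 2, 1 - v ≠ v := by decide
  unfold expand FirstHalf
  split_ifs with h
  · simp only [h]
  · simp only [h, iff_false]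
    exact hflip _

section Step

variable {a b : ℕ} (hab : a < b) (hD : b - a ∈ D) (hhalf : FirstHalf a ↔ FirstHalf b)
include hab hD hhalf

lemma even_of_step (ha : Even a) : Even b := by
  simp only [FirstHalf, Nat.even_iff] at *
  rcases mem_D_cases hD with h | h | h <;> omega

lemma odd_even_of_step_of_pos_eq (h : pos a = pos b) : Odd a ∧ Even b := by
  simp only [FirstHalf, pos, Nat.even_iff, Nat.odd_iff] at *
  rcases mem_D_cases hD with h | h | h <;> omega

end Step

section Sequence

variable {k : ℕ} {x : ℕ → ℕ}
  (hstep : ∀ i, i + 1 < k → x i < x (i + 1) ∧ x (i + 1) - x i ∈ D)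
  (hhalf : ∀ i, i + 1 < k → (FirstHalf (x i) ↔ FirstHalf (x (i + 1))))
include hstep hhalf

lemma even_of_even_of_le {i j : ℕ} (hi : Even (x i)) (hij : i ≤ j) (hj : j < k) : Even (x j) := by
  induction j, hij using Nat.le_induction with
  | base => exact hi
  | succ j _ ih =>
    exact even_of_step (hstep j hj).1 (hstep j hj).2 (hhalf j hj) (ih (by omega))

lemma card_plateaus_le_one : #{i ∈ range (k - 1) | pos (x i) = pos (x (i + 1))} ≤ 1 := by
  have plateau_parity : ∀ i, i + 1 < k → pos (x i) = pos (x (i + 1)) →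
      Odd (x i) ∧ Even (x (i + 1)) := fun i hi =>
    odd_even_of_step_of_pos_eq (hstep i hi).1 (hstep i hi).2 (hhalf i hi)
  have ordered : ∀ i j, i + 1 < k → j + 1 < k → pos (x i) = pos (x (i + 1)) →
      pos (x j) = pos (x (j + 1)) → j ≤ i := by
    intro i j hi hj hplat_i hplat_j
    by_contra! hij
    have heven : Even (x j) :=
      even_of_even_of_le hstep hhalf (plateau_parity i hi hplat_i).2 hij (by omega)
    exact Nat.not_even_iff_odd.2 (plateau_parity j hj hplat_j).1 heven
  refine card_le_one.2 fun i hi j hj => ?_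
  simp only [mem_filter, mem_range] at hi hj
  exact le_antisymm (ordered j i (by omega) (by omega) hj.2 hi.2)
    (ordered i j (by omega) (by omega) hi.2 hj.2)

end Sequence

theorem stmt_3 (l k : ℕ) (s : ℕ → Fin 2) (x : ℕ → ℕ) (c d : Fin 2)
    (hdiff : IsDiffseqIn (4 * l) k x)
    (hmono : ∀ i < k, expand s (x i) = c)
    (hd : ∀ i < k, s (pos (x i)) = d) :
    k - 1 ≤ ((Finset.range k).image fun i => pos (x i)).card := by
  obtain ⟨-, hstep⟩ := hdiff
  have hhalf : ∀ i < k, (FirstHalf (x i) ↔ c = d) := fun i hi => by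
    rw [← expand_eq_iff_firstHalf, hmono i hi, hd i hi]
  rcases k with _ | n
  · simp
  have hx : MonotoneOn x (Set.Iic n) := by
    refine monotoneOn_of_le_add_one Set.ordConnected_Iic fun i _ _ hi => (hstep i ?_).1.le
    simp only [Set.mem_Iic] at hi
    omega
  have hcount :=
    card_le_card_image_add_card_plateaus (fun i => pos (x i)) n (pos_mono.comp_monotoneOn hx)
  have hplateaus := card_plateaus_le_one hstep
    fun i hi => (hhalf i (by omega)).trans (hhalf (i + 1) hi).symm
  simp only [Nat.add_sub_cancel] at hplateaus ⊢
  omega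
end

section
/- Let l ≥ 1 and let s_alt be the alternating binary string of length l defined by (s_alt)_i = i mod 2. Let s_alt^{(l-1)} be its (l-1)-fold expansion, a binary string of length l·4^{l-1}. Then every monochromatic D-diffsequence contained in {1,...,l·4^{l-1}} with respect to s_alt^{(l-1)} has length at most (3l² - 3l + 2)/2; that is, ψ_{s_alt^{(l-1)}}(0) ≤ (3l² - 3l + 2)/2. -/
/- Index the positions of `alt^{(r)}` from `0`, so that `altExpansion r (t + 1)` is the colour of
index `t`, and give index `t` the potential `potential r t`: the block number `t / 4^r` plus, at
each level `i < r` of the expansion, a weight `6i+3, 6i+5, 0, 2` according to the base-4 digit of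
`t` at that level. Every `D`-step either stays inside a block of four, crosses into the next block
with a difference `≤ 2`, or has length `4 * 2^e` and so is a `D`-step of the block numbers; by
induction on `r` it raises the potential by at least 2, or by at least `1 - 6r` when the colour
changes. A monochromatic sequence thus gains 2 per step, while the potential of an
index below `l * 4^(l-1)` is at most `l - 1 + 3(l-1)^2 + 2(l-1)`. -/

def altExpansion (r : ℕ) : ℕ → Fin 2 :=
  expand^[r] fun i => Fin.ofNat 2 (i % 2)

def potential : ℕ → ℕ → ℕ
  | 0, t => t
  | r + 1, t => potential r (t / 4) + (if t % 4 < 2 then 6 * r + 3 else 0) + 2 * (t % 2)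

theorem expand_apply_add_one (s : ℕ → Fin 2) (t : ℕ) :
    expand s (t + 1) = s (t / 4 + 1) + Fin.ofNat 2 (t / 2) := by
  have hpos : pos (t + 1) = t / 4 + 1 := by unfold pos; omega
  unfold expand
  rw [hpos]
  apply Fin.ext
  have hs := (s (t / 4 + 1)).isLt
  split_ifs with h
  · rw [Fin.val_add, Fin.val_ofNat]; omega
  · rw [Fin.val_add, Fin.val_ofNat, Fin.sub_def]; simp only [Fin.val_one]; omega

theorem altExpansion_zero_apply (m : ℕ) : altExpansion 0 m = Fin.ofNat 2 m := by
  apply Fin.ext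
  simp [altExpansion]

theorem altExpansion_succ_apply_add_one (r t : ℕ) :
    altExpansion (r + 1) (t + 1) = altExpansion r (t / 4 + 1) + Fin.ofNat 2 (t / 2) := by
  rw [altExpansion, Function.iterate_succ_apply', expand_apply_add_one, altExpansion]

theorem Fin.ofNat_two_eq_ofNat_two_iff {a b : ℕ} : Fin.ofNat 2 a = Fin.ofNat 2 b ↔ a % 2 = b % 2 := by
  rw [Fin.ext_iff, Fin.val_ofNat, Fin.val_ofNat]

theorem D_step_cases {x y : ℕ} (hxy : x < y) (hD : y - x ∈ D) :
    (x / 4 = y / 4 ∧ y ≤ x + 2) ∨ (y / 4 = x / 4 + 1 ∧ 2 ≤ x % 4 ∧ y % 4 < 2) ∨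
      (x / 4 < y / 4 ∧ y / 4 - x / 4 ∈ D ∧ x % 4 = y % 4) := by
  obtain ⟨e, he⟩ := hD
  match e with
  | 0 => omega
  | 1 => omega
  | e + 2 =>
    have hpow : 2 ^ (e + 2) = 2 ^ e * 4 := by ring
    have := Nat.one_le_two_pow (n := e)
    exact Or.inr (Or.inr ⟨by omega, ⟨e, by omega⟩, by omega⟩)

theorem potential_le (r t : ℕ) : potential r t ≤ t / 4 ^ r + 3 * r ^ 2 + 2 * r := by
  induction r generalizing t with
  | zero => simp [potential]
  | succ r ih =>
    have hdiv : t / 4 ^ (r + 1) = t / 4 / 4 ^ r := by rw [pow_succ', Nat.div_div_eq_div_mul]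
    have := ih (t / 4)
    simp only [potential, hdiv]
    split_ifs <;> nlinarith [Nat.mod_lt t two_pos]

theorem potential_add_two_le (r : ℕ) {t t' : ℕ} (hlt : t < t') (hD : t' - t ∈ D) :
    potential r t + 2 ≤
      potential r t' + if altExpansion r (t + 1) = altExpansion r (t' + 1) then 0 else 6 * r + 1 := by
  induction r generalizing t t' with
  | zero =>
    simp only [potential, altExpansion_zero_apply, Fin.ofNat_two_eq_ofNat_two_iff]
    split_ifs <;> omega
  | succ r ih =>
    simp only [potential, altExpansion_succ_apply_add_one]
    rcases D_step_cases hlt hD with ⟨hq, hsmall⟩ | ⟨hq, hρ, hρ'⟩ | ⟨hq, hqD, hρ⟩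
    · simp only [← hq, add_right_inj, Fin.ofNat_two_eq_ofNat_two_iff]
      split_ifs <;> omega
    · have := ih (t := t / 4) (t' := t' / 4) (by omega) ⟨0, by omega⟩
      split_ifs at this ⊢ <;> omega
    · have := ih hq hqD
      have hhalf : Fin.ofNat 2 (t / 2) = Fin.ofNat 2 (t' / 2) := by
        rw [Fin.ofNat_two_eq_ofNat_two_iff]; omega
      simp only [hhalf, add_left_inj]
      split_ifs at this ⊢ <;> omega

theorem add_mul_le_of_forall_add_le {f : ℕ → ℕ} {d k : ℕ} (h : ∀ i, i + 1 < k → f i + d ≤ f (i + 1)) :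
    ∀ i < k, f 0 + d * i ≤ f i := by
  intro i
  induction i with
  | zero => simp
  | succ i ih =>
    intro hi
    have := h i hi
    have := ih (by omega)
    rw [mul_add_one]
    omega

theorem stmt_7_general (l : ℕ) (k : ℕ) (a : ℕ → ℕ)
    (ha : IsDiffseqIn (l * 4 ^ (l - 1)) k a)
    (hmono : ∃ c : Fin 2, ∀ i < k,
      (expand^[l - 1] fun i => Fin.ofNat 2 (i % 2 : ℕ)) (a i) = c) :
    k ≤ (3 * l ^ 2 - 3 * l + 2) / 2 := by
  obtain ⟨hrange, hstep⟩ := ha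
  obtain ⟨c, hc⟩ := hmono
  rcases Nat.eq_zero_or_pos k with rfl | hk
  · exact Nat.zero_le _
  have hgain : ∀ i, i + 1 < k →
      potential (l - 1) (a i - 1) + 2 ≤ potential (l - 1) (a (i + 1) - 1) := by
    intro i hi
    have h1 := hrange i (by omega)
    have h2 := hrange (i + 1) hi
    obtain ⟨hlt, hD⟩ := hstep i hi
    have h := potential_add_two_le (l - 1) (t := a i - 1) (t' := a (i + 1) - 1) (by omega)
      (by rwa [Nat.sub_sub_sub_cancel_right h1.1])
    rwa [Nat.sub_add_cancel h1.1, Nat.sub_add_cancel h2.1, altExpansion, hc i (by omega),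
      hc (i + 1) hi, if_pos rfl, add_zero] at h
  have hlast := add_mul_le_of_forall_add_le (f := fun i => potential (l - 1) (a i - 1)) hgain
    (k - 1) (by omega)
  have hbound := potential_le (l - 1) (a (k - 1) - 1)
  obtain ⟨h1, h2⟩ := hrange (k - 1) (by omega)
  have hquot : (a (k - 1) - 1) / 4 ^ (l - 1) < l :=
    Nat.div_lt_of_lt_mul (by rw [mul_comm]; omega)
  obtain ⟨m, rfl⟩ := Nat.exists_eq_add_one.mpr ((Nat.zero_le _).trans_lt hquot)
  have hsq : 3 * (m + 1) ^ 2 - 3 * (m + 1) = 3 * m ^ 2 + 3 * m := Nat.sub_eq_of_eq_add (by ring)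
  simp only [add_tsub_cancel_right] at hlast hbound hquot
  rw [hsq, Nat.le_div_iff_mul_le two_pos]
  omega

theorem stmt_7 (l : ℕ) (hl : 1 ≤ l) (k : ℕ) (a : ℕ → ℕ)
    (ha : IsDiffseqIn (l * 4 ^ (l - 1)) k a)
    (hmono : ∃ c : Fin 2, ∀ i < k,
      (expand^[l - 1] fun i => Fin.ofNat 2 (i % 2 : ℕ)) (a i) = c) :
    k ≤ (3 * l ^ 2 - 3 * l + 2) / 2 :=
  stmt_7_general l k a ha hmono
end

section
/- For every integer l ≥ 1, there exists a 2-coloring χ : {1,...,l·4^{l-1}} → {0,1} such that every monochromatic D-diffsequence contained in {1,...,l·4^{l-1}} has length at most (3l² - 3l + 2)/2. -/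
/-- A "good step" for a coloring `t`: increasing, gap a power of 2, and any
color change happens only with gap exactly 1. -/
def gstep (t : ℕ → Fin 2) (x y : ℕ) : Prop :=
  x < y ∧ y - x ∈ D ∧ (t x ≠ t y → y = x + 1)

/-- Number of color changes along a chain with head `x`. -/
def chg (t : ℕ → Fin 2) : ℕ → List ℕ → ℕ
  | _, [] => 0
  | x, y :: r => (if t x = t y then 0 else 1) + chg t y r

@[simp] lemma chg_nil (t : ℕ → Fin 2) (x : ℕ) : chg t x [] = 0 := rfl

@[simp] lemma chg_cons (t : ℕ → Fin 2) (x y : ℕ) (r : List ℕ) :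
    chg t x (y :: r) = (if t x = t y then 0 else 1) + chg t y r := rfl

/-- Potential for the length bookkeeping, by offset mod 4. -/
def vv (o : ℕ) : ℕ := if o = 3 then 2 else if o = 2 then 0 else 1

/-- Potential for the change bookkeeping, by offset mod 4. -/
def dd (o : ℕ) : ℕ := if o = 0 ∨ o = 3 then 1 else 0

lemma vv_le (o : ℕ) : vv o ≤ 2 := by unfold vv; split <;> [omega; (split <;> omega)]

lemma dd_le (o : ℕ) : dd o ≤ 1 := by unfold dd; split <;> omega

lemma vv0 : vv 0 = 1 := by norm_num [vv]
lemma vv1 : vv 1 = 1 := by norm_num [vv]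
lemma vv2 : vv 2 = 0 := by norm_num [vv]
lemma vv3 : vv 3 = 2 := by norm_num [vv]
lemma dd0 : dd 0 = 1 := by norm_num [dd]
lemma dd1 : dd 1 = 0 := by norm_num [dd]
lemma dd2 : dd 2 = 0 := by norm_num [dd]
lemma dd3 : dd 3 = 1 := by norm_num [dd]

lemma f2a : ∀ c : Fin 2, c ≠ 1 - c := by decide
lemma f2b : ∀ c c' : Fin 2, 1 - c = c' → c ≠ c' := by decide
lemma f2c : ∀ c c' : Fin 2, ¬(1 - c = c') → c = c' := by decide
lemma f2d : ∀ c c' : Fin 2, c ≠ c' → 1 - c ≠ 1 - c' := by decide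

lemma core (s : ℕ → Fin 2) :
    ∀ (L : List ℕ) (x : ℕ), List.Chain (gstep (expand s)) x L →
    ∃ M : List ℕ, List.Chain (gstep s) (pos x) M ∧
      (∀ y ∈ M, ∃ z ∈ L, y = pos z) ∧
      (x :: L).length ≤ (pos x :: M).length + 3 * chg (expand s) x L + vv (x % 4) ∧
      chg s (pos x) M ≤ chg (expand s) x L + dd (x % 4) := by
  intro L
  induction L with
  | nil =>
      intro x _
      exact ⟨[], List.Chain.nil, by simp, by simp, by simp⟩
  | cons y L ih =>
      intro x hch
      obtain ⟨h, hc⟩ := List.isChain_cons_cons.mp hch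
      obtain ⟨M, hM, hmem, hlen, hchg⟩ := ih y hc
      obtain ⟨hxy, ⟨i, hi⟩, hhop⟩ := h
      have hy : y = x + 2 ^ i := by omega
      have memw : ∀ y' ∈ M, ∃ z ∈ y :: L, y' = pos z := by
        intro y' hy'
        obtain ⟨z, hz, rfl⟩ := hmem y' hy'
        exact ⟨z, List.mem_cons_of_mem _ hz, rfl⟩
      have memc : ∀ y' ∈ pos y :: M, ∃ z ∈ y :: L, y' = pos z := by
        intro y' hy'
        rcases List.mem_cons.mp hy' with rfl | h'
        · exact ⟨y, List.mem_cons_self, rfl⟩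
        · exact memw y' h'
      match i, hy with
      | 0, hy =>
        have hy1 : y = x + 1 := by omega
        have h4 : x % 4 = 0 ∨ x % 4 = 1 ∨ x % 4 = 2 ∨ x % 4 = 3 := by omega
        rcases h4 with ho | ho | ho | ho
        · -- offset 0, +1 : crossing
          have hpy : pos y = pos x + 1 := by unfold pos; omega
          have hy4 : y % 4 = 1 := by omega
          have hcx : expand s x = 1 - s (pos x) := by
            simp only [expand]; rw [if_neg (by omega)]
          have hcy : expand s y = s (pos y) := by
            simp only [expand]; rw [if_pos (by omega)]
          by_cases hcc : expand s x = expand s y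
          · have hsne : s (pos x) ≠ s (pos y) := f2b _ _ (by rw [← hcx, hcc, hcy])
            refine ⟨pos y :: M,
              List.Chain.cons ⟨by omega, ⟨0, by omega⟩, fun _ => by omega⟩ hM, memc, ?_, ?_⟩
            · rw [hy4] at hlen
              simp only [List.length_cons, chg_cons, if_pos hcc, ho] at hlen ⊢
              simp only [vv0, vv1, vv2, vv3] at hlen ⊢; omega
            · rw [hy4] at hchg
              simp only [chg_cons, if_pos hcc, if_neg hsne, ho] at hchg ⊢
              simp only [dd0, dd1, dd2, dd3] at hchg ⊢; omega
          · have hse : s (pos x) = s (pos y) :=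
              f2c _ _ (fun hh => hcc (by rw [hcx, hcy]; exact hh))
            refine ⟨pos y :: M,
              List.Chain.cons ⟨by omega, ⟨0, by omega⟩, fun _ => by omega⟩ hM, memc, ?_, ?_⟩
            · rw [hy4] at hlen
              simp only [List.length_cons, chg_cons, if_neg hcc, ho] at hlen ⊢
              simp only [vv0, vv1, vv2, vv3] at hlen ⊢; omega
            · rw [hy4] at hchg
              simp only [chg_cons, if_neg hcc, if_pos hse, ho] at hchg ⊢
              simp only [dd0, dd1, dd2, dd3] at hchg ⊢; omega
        · -- offset 1, +1 : within, no change
          have hpy : pos y = pos x := by unfold pos; omega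
          have hy4 : y % 4 = 2 := by omega
          have hcx : expand s x = s (pos x) := by
            simp only [expand]; rw [if_pos (by omega)]
          have hcy : expand s y = s (pos y) := by
            simp only [expand]; rw [if_pos (by omega)]
          have hcc : expand s x = expand s y := by rw [hcx, hcy, hpy]
          refine ⟨M, by rw [← hpy]; exact hM, memw, ?_, ?_⟩
          · rw [hy4] at hlen
            simp only [List.length_cons, chg_cons, if_pos hcc, ho] at hlen ⊢
            simp only [vv0, vv1, vv2, vv3] at hlen ⊢; omega
          · rw [hy4] at hchg
            rw [← hpy]
            simp only [chg_cons, if_pos hcc, ho]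
            simp only [dd0, dd1, dd2, dd3] at hchg ⊢; omega
        · -- offset 2, +1 : within, change
          have hpy : pos y = pos x := by unfold pos; omega
          have hy4 : y % 4 = 3 := by omega
          have hcx : expand s x = s (pos x) := by
            simp only [expand]; rw [if_pos (by omega)]
          have hcy : expand s y = 1 - s (pos y) := by
            simp only [expand]; rw [if_neg (by omega)]
          have hcc : expand s x ≠ expand s y := by rw [hcx, hcy, hpy]; exact f2a _
          refine ⟨M, by rw [← hpy]; exact hM, memw, ?_, ?_⟩
          · rw [hy4] at hlen
            simp only [List.length_cons, chg_cons, if_neg hcc, ho] at hlen ⊢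
            simp only [vv0, vv1, vv2, vv3] at hlen ⊢; omega
          · rw [hy4] at hchg
            rw [← hpy]
            simp only [chg_cons, if_neg hcc, ho]
            simp only [dd0, dd1, dd2, dd3] at hchg ⊢; omega
        · -- offset 3, +1 : within, no change
          have hpy : pos y = pos x := by unfold pos; omega
          have hy4 : y % 4 = 0 := by omega
          have hcx : expand s x = 1 - s (pos x) := by
            simp only [expand]; rw [if_neg (by omega)]
          have hcy : expand s y = 1 - s (pos y) := by
            simp only [expand]; rw [if_neg (by omega)]
          have hcc : expand s x = expand s y := by rw [hcx, hcy, hpy]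
          refine ⟨M, by rw [← hpy]; exact hM, memw, ?_, ?_⟩
          · rw [hy4] at hlen
            simp only [List.length_cons, chg_cons, if_pos hcc, ho] at hlen ⊢
            simp only [vv0, vv1, vv2, vv3] at hlen ⊢; omega
          · rw [hy4] at hchg
            rw [← hpy]
            simp only [chg_cons, if_pos hcc, ho]
            simp only [dd0, dd1, dd2, dd3] at hchg ⊢; omega
      | 1, hy =>
        have hy2 : y = x + 2 := by omega
        have h4 : x % 4 = 0 ∨ x % 4 = 1 ∨ x % 4 = 2 ∨ x % 4 = 3 := by omega
        rcases h4 with ho | ho | ho | ho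
        · -- offset 0, +2 : crossing, forced no change
          have hpy : pos y = pos x + 1 := by unfold pos; omega
          have hy4 : y % 4 = 2 := by omega
          have hcx : expand s x = 1 - s (pos x) := by
            simp only [expand]; rw [if_neg (by omega)]
          have hcy : expand s y = s (pos y) := by
            simp only [expand]; rw [if_pos (by omega)]
          have hcc : expand s x = expand s y := by
            by_contra hcc; have := hhop hcc; omega
          have hsne : s (pos x) ≠ s (pos y) := f2b _ _ (by rw [← hcx, hcc, hcy])
          refine ⟨pos y :: M,
            List.Chain.cons ⟨by omega, ⟨0, by omega⟩, fun _ => by omega⟩ hM, memc, ?_, ?_⟩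
          · rw [hy4] at hlen
            simp only [List.length_cons, chg_cons, if_pos hcc, ho] at hlen ⊢
            simp only [vv0, vv1, vv2, vv3] at hlen ⊢; omega
          · rw [hy4] at hchg
            simp only [chg_cons, if_pos hcc, if_neg hsne, ho] at hchg ⊢
            simp only [dd0, dd1, dd2, dd3] at hchg ⊢; omega
        · -- offset 1, +2 : forbidden
          exfalso
          have hpy : pos y = pos x := by unfold pos; omega
          have hcx : expand s x = s (pos x) := by
            simp only [expand]; rw [if_pos (by omega)]
          have hcy : expand s y = 1 - s (pos y) := by
            simp only [expand]; rw [if_neg (by omega)]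
          have := hhop (by rw [hcx, hcy, hpy]; exact f2a _)
          omega
        · -- offset 2, +2 : forbidden
          exfalso
          have hpy : pos y = pos x := by unfold pos; omega
          have hcx : expand s x = s (pos x) := by
            simp only [expand]; rw [if_pos (by omega)]
          have hcy : expand s y = 1 - s (pos y) := by
            simp only [expand]; rw [if_neg (by omega)]
          have := hhop (by rw [hcx, hcy, hpy]; exact f2a _)
          omega
        · -- offset 3, +2 : crossing, forced no change
          have hpy : pos y = pos x + 1 := by unfold pos; omega
          have hy4 : y % 4 = 1 := by omega
          have hcx : expand s x = 1 - s (pos x) := by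
            simp only [expand]; rw [if_neg (by omega)]
          have hcy : expand s y = s (pos y) := by
            simp only [expand]; rw [if_pos (by omega)]
          have hcc : expand s x = expand s y := by
            by_contra hcc; have := hhop hcc; omega
          have hsne : s (pos x) ≠ s (pos y) := f2b _ _ (by rw [← hcx, hcc, hcy])
          refine ⟨pos y :: M,
            List.Chain.cons ⟨by omega, ⟨0, by omega⟩, fun _ => by omega⟩ hM, memc, ?_, ?_⟩
          · rw [hy4] at hlen
            simp only [List.length_cons, chg_cons, if_pos hcc, ho] at hlen ⊢
            simp only [vv0, vv1, vv2, vv3] at hlen ⊢; omega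
          · rw [hy4] at hchg
            simp only [chg_cons, if_pos hcc, if_neg hsne, ho] at hchg ⊢
            simp only [dd0, dd1, dd2, dd3] at hchg ⊢; omega
      | (m+2), hy =>
        have hy' : y = x + 4 * 2 ^ m := by rw [hy]; ring
        have h2m : 1 ≤ 2 ^ m := Nat.one_le_two_pow
        have hpy : pos y = pos x + 2 ^ m := by unfold pos; omega
        have hy4 : y % 4 = x % 4 := by omega
        have hkey : expand s x = expand s y ∧ s (pos x) = s (pos y) := by
          by_cases ho : x % 4 = 1 ∨ x % 4 = 2
          · have hcx : expand s x = s (pos x) := by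
              simp only [expand]; rw [if_pos ho]
            have hcy : expand s y = s (pos y) := by
              simp only [expand]; rw [if_pos (by omega)]
            have hcc : expand s x = expand s y := by
              by_contra hcc; have := hhop hcc; omega
            exact ⟨hcc, by rw [← hcx, hcc, hcy]⟩
          · have hcx : expand s x = 1 - s (pos x) := by
              simp only [expand]; rw [if_neg ho]
            have hcy : expand s y = 1 - s (pos y) := by
              simp only [expand]; rw [if_neg (by omega)]
            have hcc : expand s x = expand s y := by
              by_contra hcc; have := hhop hcc; omega
            refine ⟨hcc, ?_⟩
            by_contra hne
            rw [hcx, hcy] at hcc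
            exact f2d _ _ hne hcc
        obtain ⟨hcc, hse⟩ := hkey
        refine ⟨pos y :: M,
          List.Chain.cons ⟨by omega, ⟨m, by omega⟩, fun hne => absurd hse hne⟩ hM, memc, ?_, ?_⟩
        · rw [hy4] at hlen
          simp only [List.length_cons, chg_cons, if_pos hcc] at hlen ⊢
          omega
        · rw [hy4] at hchg
          simp only [chg_cons, if_pos hcc, if_pos hse]
          omega


lemma len_le (t : ℕ → Fin 2) (n : ℕ) :
    ∀ (L : List ℕ) (x : ℕ), List.Chain (gstep t) x L →
    (∀ z ∈ x :: L, 1 ≤ z ∧ z ≤ n) → (x :: L).length + x ≤ n + 1 := by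
  intro L
  induction L with
  | nil =>
      intro x _ hb
      have := hb x (List.mem_cons_self)
      simp; omega
  | cons y L ih =>
      intro x hch hb
      obtain ⟨h, hc⟩ := List.isChain_cons_cons.mp hch
      have h2 := ih y hc (fun z hz => hb z (List.mem_cons_of_mem _ hz))
      have hxy : x < y := h.1
      simp only [List.length_cons] at h2 ⊢
      omega

lemma iter (s : ℕ → Fin 2) (n : ℕ) :
    ∀ (j : ℕ) (x : ℕ) (L : List ℕ),
    List.Chain (gstep (expand^[j] s)) x L →
    (∀ z ∈ x :: L, 1 ≤ z ∧ z ≤ n * 4 ^ j) →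
    2 * (x :: L).length ≤
      2 * n + 6 * j * chg (expand^[j] s) x L + 3 * j * (j - 1) + 4 * j := by
  intro j
  induction j with
  | zero =>
      intro x L hch hb
      simp only [Function.iterate_zero, id] at hch
      have := len_le s n L x hch (by simpa using hb)
      have hx := hb x (List.mem_cons_self)
      simp only [pow_zero, mul_one] at hb hx
      omega
  | succ j ihj =>
      intro x L hch hb
      have hrw : expand^[j+1] s = expand (expand^[j] s) :=
        Function.iterate_succ_apply' expand j s
      rw [hrw] at hch ⊢
      obtain ⟨M, hM, hmem, hlen, hchg⟩ := core (expand^[j] s) L x hch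
      have h4 : n * 4 ^ (j + 1) = 4 * (n * 4 ^ j) := by ring
      have hbM : ∀ z ∈ pos x :: M, 1 ≤ z ∧ z ≤ n * 4 ^ j := by
        intro z hz
        rcases List.mem_cons.mp hz with rfl | hz'
        · have := hb x (List.mem_cons_self)
          unfold pos; omega
        · obtain ⟨w, hw, rfl⟩ := hmem z hz'
          have := hb w (List.mem_cons_of_mem _ hw)
          unfold pos; omega
      have hIH := ihj (pos x) M hM hbM
      have hv := vv_le (x % 4)
      have hd := dd_le (x % 4)
      set cE := chg (expand (expand^[j] s)) x L with hcE
      set cS := chg (expand^[j] s) (pos x) M with hcS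
      have key : 6 * j * (cE + 1) + (3 * j * (j - 1) + 4 * j) + 6 * cE + 4 =
          6 * (j + 1) * cE + (3 * (j + 1) * j + 4 * (j + 1)) := by
        cases j with
        | zero => ring_nf
        | succ t => simp only [Nat.succ_sub_one]; ring
      have hmul : 6 * j * cS ≤ 6 * j * (cE + 1) :=
        Nat.mul_le_mul_left _ (by omega)
      have hgoal : 3 * (j + 1) * (j + 1 - 1) = 3 * (j + 1) * j := by simp
      rw [hgoal]
      simp only [List.length_cons] at hIH hlen ⊢
      omega

lemma chain_build (t : ℕ → Fin 2) (a : ℕ → ℕ) :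
    ∀ (m j : ℕ), (∀ i, i < m → gstep t (a (j + i)) (a (j + i + 1))) →
    List.Chain (gstep t) (a j) ((List.range m).map (fun i => a (j + i + 1))) := by
  intro m
  induction m with
  | zero => intro j _; exact List.Chain.nil
  | succ m ih =>
      intro j h
      rw [List.range_succ_eq_map]
      simp only [List.map_cons, List.map_map]
      have h0 := h 0 (by omega)
      simp only [Nat.add_zero] at h0
      refine List.Chain.cons h0 ?_
      have hfun : ((fun i => a (j + i + 1)) ∘ Nat.succ) = (fun i => a ((j + 1) + i + 1)) := by
        funext i
        simp only [Function.comp]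
        congr 1
        omega
      rw [hfun]
      exact ih (j + 1) (fun i hi => by
        have := h (i + 1) (by omega)
        have e1 : j + (i + 1) = (j + 1) + i := by omega
        rw [e1] at this
        exact this)

lemma chg_of_mono (t : ℕ → Fin 2) (c : Fin 2) :
    ∀ (L : List ℕ) (x : ℕ), t x = c → (∀ z ∈ L, t z = c) → chg t x L = 0 := by
  intro L
  induction L with
  | nil => intro x _ _; rfl
  | cons y L ih =>
      intro x hx hL
      have hy : t y = c := hL y (List.mem_cons_self)
      simp only [chg_cons, if_pos (hx.trans hy.symm)]
      rw [ih y hy (fun z hz => hL z (List.mem_cons_of_mem _ hz))]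

theorem stmt_8 (l : ℕ) (hl : 1 ≤ l) :
    ∃ χ : ℕ → Fin 2, ∀ (k : ℕ) (a : ℕ → ℕ), IsDiffseqIn (l * 4 ^ (l - 1)) k a →
      (∃ c : Fin 2, ∀ i < k, χ (a i) = c) → k ≤ (3 * l ^ 2 - 3 * l + 2) / 2 := by
  refine ⟨expand^[l - 1] (fun _ => 0), ?_⟩
  intro k a hseq hmono
  rcases Nat.eq_zero_or_pos k with rfl | hk
  · exact Nat.zero_le _
  obtain ⟨c, hc⟩ := hmono
  obtain ⟨hbd, hstep⟩ := hseq
  set t := expand^[l - 1] (fun _ => (0 : Fin 2)) with ht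
  set L := (List.range (k - 1)).map (fun i => a (0 + i + 1)) with hL
  have hmemL : ∀ z ∈ a 0 :: L, ∃ i < k, z = a i := by
    intro z hz
    rcases List.mem_cons.mp hz with rfl | hz'
    · exact ⟨0, hk, rfl⟩
    · simp only [hL, List.mem_map, List.mem_range] at hz'
      obtain ⟨i, hi, rfl⟩ := hz'
      exact ⟨0 + i + 1, by omega, rfl⟩
  have hch : List.Chain (gstep t) (a 0) L := by
    apply chain_build
    intro i hi
    have hs := hstep (0 + i) (by omega)
    exact ⟨hs.1, hs.2, fun hne => absurd (by
      rw [hc (0 + i) (by omega), hc (0 + i + 1) (by omega)]) hne⟩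
  have hbnd : ∀ z ∈ a 0 :: L, 1 ≤ z ∧ z ≤ l * 4 ^ (l - 1) := by
    intro z hz
    obtain ⟨i, hi, rfl⟩ := hmemL z hz
    exact hbd i hi
  have hchg0 : chg t (a 0) L = 0 := by
    apply chg_of_mono t c
    · exact hc 0 hk
    · intro z hz
      obtain ⟨i, hi, rfl⟩ := hmemL z (List.mem_cons_of_mem _ hz)
      exact hc i hi
  have hiter := iter (fun _ => (0 : Fin 2)) l (l - 1) (a 0) L hch hbnd
  rw [hchg0] at hiter
  have hlenL : (a 0 :: L).length = k := by
    simp only [hL, List.length_cons, List.length_map, List.length_range]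
    omega
  rw [hlenL] at hiter
  -- arithmetic: 2l + 3(l-1)(l-2) + 4(l-1) = 3l^2 - 3l + 2 for l ≥ 1
  have hid : 2 * l + 3 * (l - 1) * (l - 1 - 1) + 4 * (l - 1) + 3 * l = 3 * l ^ 2 + 2 := by
    obtain ⟨m, rfl⟩ : ∃ m, l = m + 1 := ⟨l - 1, by omega⟩
    cases m with
    | zero => norm_num
    | succ t' => simp only [Nat.add_sub_cancel, Nat.succ_sub_one]; ring
  omega
end

section
/- Let D = {2^i : i ∈ ℤ_{≥0}}, let l ≥ 1 and let k be an integer with k > (3l² - 3l + 2)/2. If n is a positive integer such that every 2-coloring of {1,...,n} admits a monochromatic D-diffsequence of length k, then n > l·4^{l-1}; in particular Δ(D,k) ≥ l·4^{l-1}. -/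
/-!
Color `{1, …, l·4^(l-1)}` by the `(l-1)`-fold expansion of a constant string, and call a
diffsequence admissible for `s` if its color changes only at steps of length one. Replacing
each term `x` of an admissible diffsequence of `expand s` in `{1, …, 4n}` by its block `pos x`
and merging repeated blocks gives an admissible diffsequence of `s` in `{1, …, n}`: steps of
length `4t` become steps of length `t`, steps of length 1 or 2 stay in a block or move to the
next one. Since the blocks read `0011` or `1100`, if the original has `h` color changes, the
projection has at most `h + 1` of them and at most `3h + 2` fewer terms. Starting from the
bound `l` on `{1, …, l}`, an admissible diffsequence for the `j`-fold expansion with at most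
`h` color changes has at most `l + 3jh + j(3j+1)/2` terms; for a monochromatic one, `j = l - 1`
and `h = 0` give at most `(3l² - 3l + 2)/2 < k` terms.
-/

lemma one_mem_D : 1 ∈ D := ⟨0, rfl⟩

lemma pos_of_mem_D {g : ℕ} (hg : g ∈ D) : 0 < g := by
  obtain ⟨i, rfl⟩ := hg
  positivity

lemma mem_D_cases_s9 {g : ℕ} (hg : g ∈ D) : g = 1 ∨ g = 2 ∨ ∃ t ∈ D, g = 4 * t := by
  obtain ⟨i, rfl⟩ := hg
  match i with
  | 0 => exact Or.inl rfl
  | 1 => exact Or.inr (Or.inl rfl)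
  | i + 2 => exact Or.inr (Or.inr ⟨2 ^ i, ⟨i, rfl⟩, by ring⟩)

lemma pos_four_mul_add (q r : ℕ) : pos (4 * q + r) = q + pos r := by
  unfold pos
  omega

lemma pos_add_four_mul (x t : ℕ) : pos (x + 4 * t) = pos x + t := by
  unfold pos
  omega

lemma pos_mem_Icc {n x : ℕ} (hx : x ∈ Finset.Icc 1 (4 * n)) : pos x ∈ Finset.Icc 1 n := by
  simp only [Finset.mem_Icc] at hx ⊢
  unfold pos
  omega

lemma expand_eq_expand_add_four_mul_iff (s : ℕ → Fin 2) (x t : ℕ) :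
    expand s x = expand s (x + 4 * t) ↔ s (pos x) = s (pos x + t) := by
  have hmod : (x + 4 * t) % 4 = x % 4 := by omega
  unfold expand
  rw [pos_add_four_mul, hmod]
  split_ifs <;> simp

def AdmissibleStep (s : ℕ → Fin 2) (u v : ℕ) : Prop :=
  u < v ∧ v - u ∈ D ∧ (s u ≠ s v → v = u + 1)

def colorChanges (s : ℕ → Fin 2) : List ℕ → ℕ
  | x :: y :: L => (if s x = s y then 0 else 1) + colorChanges s (y :: L)
  | _ => 0

lemma colorChanges_cons_cons (s : ℕ → Fin 2) (x y : ℕ) (L : List ℕ) :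
    colorChanges s (x :: y :: L) = (if s x = s y then 0 else 1) + colorChanges s (y :: L) := rfl

lemma colorChanges_eq_zero {s : ℕ → Fin 2} {c : Fin 2} :
    ∀ {L : List ℕ}, (∀ z ∈ L, s z = c) → colorChanges s L = 0
  | [], _ | [_], _ => rfl
  | x :: y :: L, hc => by
    rw [colorChanges_cons_cons, colorChanges_eq_zero fun z hz => hc z (List.mem_cons_of_mem _ hz),
      if_pos ((hc x (by simp)).trans (hc y (by simp)).symm)]

lemma length_le_of_isChain_lt {L : List ℕ} {m : ℕ} (hL : L.IsChain (· < ·))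
    (hmem : ∀ z ∈ L, z ∈ Finset.Icc 1 m) : L.length ≤ m := by
  rw [← List.toFinset_card_of_nodup (List.isChain_iff_pairwise.mp hL).nodup]
  simpa using Finset.card_le_card (s := L.toFinset) fun z hz => hmem z (List.mem_toFinset.mp hz)

section Expand

/- In a block `4p-3, 4p-2, 4p-1, 4p` (residues `1, 2, 3, 0` mod 4) an admissible diffsequence of
`expand s` can only take unit steps, and only `4p-2 → 4p-1` changes color. `lengthPotential`
pays for the terms merged into one block; `changePotential` is `1` exactly where `expand s`
agrees with `s ∘ pos`. -/

def lengthPotential (x : ℕ) : ℕ := if x % 4 = 2 then 2 else if x % 4 = 3 then 0 else 1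

def changePotential (x : ℕ) : ℕ := if x % 4 = 1 ∨ x % 4 = 2 then 1 else 0

lemma lengthPotential_le_two (x : ℕ) : lengthPotential x ≤ 2 := by
  unfold lengthPotential; split_ifs <;> omega

lemma changePotential_le_one (x : ℕ) : changePotential x ≤ 1 := by
  unfold changePotential; split_ifs <;> omega

variable {s : ℕ → Fin 2} {x y : ℕ}

lemma AdmissibleStep.expand_cases (h : AdmissibleStep (expand s) x y) :
    (y = x + 1 ∨ y = x + 2 ∧ expand s x = expand s y) ∨
      ∃ t ∈ D, y = x + 4 * t ∧ expand s x = expand s y := by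
  obtain ⟨hlt, hD, hhop⟩ := h
  rcases mem_D_cases_s9 hD with h1 | h2 | ⟨t, ht, h4⟩
  · omega
  · refine Or.inl (Or.inr ⟨by omega, by_contra fun hne => ?_⟩)
    have := hhop hne
    omega
  · refine Or.inr ⟨t, ht, by omega, by_contra fun hne => ?_⟩
    have := hhop hne
    have := pos_of_mem_D ht
    omega

lemma AdmissibleStep.pos_eq_or_admissibleStep (h : AdmissibleStep (expand s) x y) :
    pos x = pos y ∨ AdmissibleStep s (pos x) (pos y) := by
  rcases h.expand_cases with hy | ⟨t, ht, rfl, he⟩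
  · have : pos y = pos x ∨ pos y = pos x + 1 := by unfold pos; omega
    rcases this with hp | hp
    · exact Or.inl hp.symm
    · exact Or.inr ⟨by omega, by simpa [hp] using one_mem_D, fun _ => hp⟩
  · have := pos_of_mem_D ht
    rw [expand_eq_expand_add_four_mul_iff] at he
    rw [pos_add_four_mul]
    exact Or.inr ⟨by omega, by simpa using ht, fun hne => absurd he hne⟩

lemma AdmissibleStep.potentials_of_expand (h : AdmissibleStep (expand s) x y) :
    lengthPotential x + (if pos x = pos y then 1 else 0) ≤
        lengthPotential y + 3 * (if expand s x = expand s y then 0 else 1) ∧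
      (if pos x ≠ pos y ∧ s (pos x) ≠ s (pos y) then 1 else 0) + changePotential x ≤
        (if expand s x = expand s y then 0 else 1) + changePotential y := by
  rcases h.expand_cases with hy | ⟨t, ht, rfl, he⟩
  -- a step of length 1 or 2 only involves the residue of `x` and the colors of three blocks
  · obtain ⟨q, r, hr, rfl⟩ : ∃ q r, r < 4 ∧ x = 4 * q + r :=
      ⟨x / 4, x % 4, Nat.mod_lt _ (by norm_num), (Nat.div_add_mod x 4).symm⟩
    rcases hy with rfl | ⟨rfl, he⟩ <;> interval_cases r <;>
      simp only [expand, lengthPotential, changePotential, pos_four_mul_add, Nat.add_assoc] at * <;>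
      simp only [pos] at * <;> norm_num at * <;>
      generalize s q = a, s (q + 1) = b, s (q + 2) = c at * <;> revert a b c <;> decide
  · have hmod : (x + 4 * t) % 4 = x % 4 := by omega
    have ht0 : t ≠ 0 := (pos_of_mem_D ht).ne'
    have hs := (expand_eq_expand_add_four_mul_iff s x t).mp he
    simp [lengthPotential, changePotential, pos_add_four_mul, hmod, he, hs, ht0]

theorem exists_projection_of_isChain_expand (s : ℕ → Fin 2) (n : ℕ) :
    ∀ (L : List ℕ) (x : ℕ), (x :: L).IsChain (AdmissibleStep (expand s)) →
      (∀ z ∈ x :: L, z ∈ Finset.Icc 1 (4 * n)) →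
      ∃ L' : List ℕ, (pos x :: L').IsChain (AdmissibleStep s) ∧
        (∀ z ∈ pos x :: L', z ∈ Finset.Icc 1 n) ∧
        (x :: L).length + lengthPotential x ≤
          (pos x :: L').length + 2 + 3 * colorChanges (expand s) (x :: L) ∧
        colorChanges s (pos x :: L') + changePotential x ≤ colorChanges (expand s) (x :: L) + 1
  | [], x, _, hmem => by
    refine ⟨[], List.isChain_singleton _, ?_, ?_, ?_⟩
    · simpa using pos_mem_Icc (hmem x (by simp))
    · simp only [colorChanges, List.length_singleton]
      linarith [lengthPotential_le_two x]
    · simpa [colorChanges] using changePotential_le_one x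
  | y :: L, x, hchain, hmem => by
    rw [List.isChain_cons_cons] at hchain
    obtain ⟨hxy, hchain⟩ := hchain
    obtain ⟨L', hchain', hmem', hlen, hchg⟩ :=
      exists_projection_of_isChain_expand s n L y hchain fun z hz =>
        hmem z (List.mem_cons_of_mem _ hz)
    obtain ⟨hpot_len, hpot_chg⟩ := hxy.potentials_of_expand
    rw [colorChanges_cons_cons]
    rcases hxy.pos_eq_or_admissibleStep with hp | hstep
    · refine ⟨L', hp ▸ hchain', hp ▸ hmem', ?_, ?_⟩
      · simp only [hp, if_true, List.length_cons] at hpot_len hlen ⊢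
        split_ifs at hpot_len ⊢ <;> omega
      · simp only [hp, ne_eq, not_true, false_and, if_false] at hpot_chg hchg ⊢
        split_ifs at hpot_chg ⊢ <;> omega
    · have hp : pos x ≠ pos y := hstep.1.ne
      refine ⟨pos y :: L', List.isChain_cons_cons.mpr ⟨hstep, hchain'⟩, ?_, ?_, ?_⟩
      · exact List.forall_mem_cons.mpr ⟨pos_mem_Icc (hmem x (by simp)), hmem'⟩
      · simp only [hp, if_false, List.length_cons] at hpot_len hlen ⊢
        split_ifs at hpot_len ⊢ <;> omega
      · simp only [hp, ne_eq, not_false_eq_true, true_and, colorChanges_cons_cons]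
          at hpot_chg hchg ⊢
        split_ifs at hpot_chg ⊢ <;> omega

end Expand

theorem two_mul_length_le_of_isChain_iterate_expand (l : ℕ) :
    ∀ (j : ℕ) (s : ℕ → Fin 2) (h : ℕ) (L : List ℕ),
    L.IsChain (AdmissibleStep (expand^[j] s)) → (∀ z ∈ L, z ∈ Finset.Icc 1 (l * 4 ^ j)) →
      colorChanges (expand^[j] s) L ≤ h → 2 * L.length ≤ 2 * l + j * (6 * h + 3 * j + 1)
  | 0, s, h, L, hchain, hmem, _ => by
    have := length_le_of_isChain_lt (hchain.imp fun _ _ hstep => hstep.1) (by simpa using hmem)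
    omega
  | _ + 1, _, _, [], _, _, _ => by simp
  | j + 1, s, h, x :: L, hchain, hmem, hchg => by
    rw [Function.iterate_succ_apply'] at hchain hchg
    have hmem4 : ∀ z ∈ x :: L, z ∈ Finset.Icc 1 (4 * (l * 4 ^ j)) := by
      simpa [pow_succ, mul_comm, mul_left_comm, mul_assoc] using hmem
    obtain ⟨L', hchain', hmem', hlen, hchg'⟩ :=
      exists_projection_of_isChain_expand _ _ L x hchain hmem4
    have := two_mul_length_le_of_isChain_iterate_expand l j s (h + 1) (pos x :: L') hchain' hmem'
      (by omega)
    nlinarith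

section Diffseq

variable {n k : ℕ} {a : ℕ → ℕ}

lemma IsDiffseqIn.mem_Icc (ha : IsDiffseqIn n k a) :
    ∀ z ∈ (List.range k).map a, z ∈ Finset.Icc 1 n := by
  simp only [List.mem_map, List.mem_range, forall_exists_index, and_imp, forall_apply_eq_imp_iff₂]
  exact fun i hi => Finset.mem_Icc.mpr (ha.1 i hi)

lemma IsDiffseqIn.isChain_admissibleStep {χ : ℕ → Fin 2} {c : Fin 2} (ha : IsDiffseqIn n k a)
    (hc : ∀ i < k, χ (a i) = c) : ((List.range k).map a).IsChain (AdmissibleStep χ) := by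
  rw [List.isChain_map, List.isChain_range]
  intro i hi
  obtain ⟨hlt, hD⟩ := ha.2 i (by omega)
  exact ⟨hlt, hD, fun hne => absurd ((hc i (by omega)).trans (hc (i + 1) (by omega)).symm) hne⟩

end Diffseq

theorem stmt_9_general (l k n : ℕ) (hk : (3 * l ^ 2 - 3 * l + 2) / 2 < k)
    (H : ∀ χ : ℕ → Fin 2, ∃ a : ℕ → ℕ, IsDiffseqIn n k a ∧ ∃ c : Fin 2, ∀ i < k, χ (a i) = c) :
    l * 4 ^ (l - 1) < n := by
  by_contra! hn
  obtain ⟨a, ha, c, hc⟩ := H (expand^[l - 1] fun _ => 0)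
  have hmono : colorChanges (expand^[l - 1] fun _ => 0) ((List.range k).map a) = 0 :=
    colorChanges_eq_zero (c := c) (by simpa using hc)
  have hlen := two_mul_length_le_of_isChain_iterate_expand l (l - 1) (fun _ => 0) 0
    ((List.range k).map a) (ha.isChain_admissibleStep hc)
    (fun z hz => Finset.Icc_subset_Icc_right hn (ha.mem_Icc z hz)) hmono.le
  rw [List.length_map, List.length_range] at hlen
  rcases l with _ | m
  · omega
  · simp only [Nat.add_sub_cancel] at hk hlen
    ring_nf at hk hlen
    omega

theorem stmt_9 (l k n : ℕ) (hl : 1 ≤ l) (hk : (3 * l ^ 2 - 3 * l + 2) / 2 < k) (hn : 1 ≤ n)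
    (H : ∀ χ : ℕ → Fin 2, ∃ a : ℕ → ℕ, IsDiffseqIn n k a ∧ ∃ c : Fin 2, ∀ i < k, χ (a i) = c) :
    l * 4 ^ (l - 1) < n :=
  stmt_9_general l k n hk H
end

section
/- Let s be a binary string of length l and s^{(1)} its expansion. Let x, y be positive integers with x < y ≤ 4l such that y - x = 2^m for some integer m ≥ 2 and s^{(1)}_x = s^{(1)}_y. Then s_{pos(x)} = s_{pos(y)}. -/
theorem expand_eq_expand_iff {s : ℕ → Fin 2} {x y : ℕ} (hmod : x % 4 = y % 4) :
    expand s x = expand s y ↔ s (pos x) = s (pos y) := by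
  unfold expand
  rw [hmod]
  split_ifs
  · rfl
  · exact sub_right_inj

theorem modEq_four_of_sub_eq_two_pow {x y m : ℕ} (hm : 2 ≤ m) (hpow : y - x = 2 ^ m) :
    x ≡ y [MOD 4] := by
  have hle : x ≤ y := by
    have := Nat.two_pow_pos m
    omega
  refine (Nat.modEq_iff_dvd' hle).mpr ?_
  rw [hpow]
  exact (pow_dvd_pow 2 hm : 2 ^ 2 ∣ 2 ^ m)

theorem stmt_11_general (s : ℕ → Fin 2) (x y m : ℕ)
    (hm : 2 ≤ m) (hpow : y - x = 2 ^ m)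
    (heq : expand s x = expand s y) :
    s (pos x) = s (pos y) :=
  (expand_eq_expand_iff (modEq_four_of_sub_eq_two_pow hm hpow)).mp heq

theorem stmt_11 (l : ℕ) (s : ℕ → Fin 2) (x y m : ℕ)
    (hx : 1 ≤ x) (hxy : x < y) (hy : y ≤ 4 * l)
    (hm : 2 ≤ m) (hpow : y - x = 2 ^ m)
    (heq : expand s x = expand s y) :
    s (pos x) = s (pos y) :=
  stmt_11_general s x y m hm hpow heq
end

section
/- Let s be a binary string of length l, s^{(1)} its expansion, and let x_1 < ... < x_k be a monochromatic D-diffsequence in {1,...,4l} of color c ∈ {0,1} under s^{(1)} such that s_{pos(x_i)} = d for all 1 ≤ i ≤ k, for some fixed d ∈ {0,1}. Then there is at most one index j ∈ {1,...,k-1} with pos(x_j) = pos(x_{j+1}). -/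
/-! The monochromatic terms with `s (pos x_i) = d` all lie in the copied half `{1, 2}` of their
block of four (if `c = d`) or all in the complemented half `{3, 0}` (if `c ≠ d`). Since every
step is `1`, `2` or a multiple of `4`, a step inside one block must go from the odd to the even
member of that half, and from an even term no step can leave the even residue class. So after
the first step inside a block all later terms are even, and no second such step is possible. -/

lemma D_eq_one_or_eq_two_or_four_dvd {t : ℕ} (ht : t ∈ D) : t = 1 ∨ t = 2 ∨ 4 ∣ t := by
  obtain ⟨i, rfl⟩ := ht
  match i with
  | 0 => exact Or.inl rfl
  | 1 => exact Or.inr (Or.inl rfl)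
  | i + 2 => exact Or.inr (Or.inr (Dvd.intro_left _ (pow_add 2 i 2).symm))

lemma expand_eq_iff (s : ℕ → Fin 2) (m : ℕ) :
    expand s m = s (pos m) ↔ m % 4 = 1 ∨ m % 4 = 2 := by
  have hne : ∀ e : Fin 2, 1 - e ≠ e := by decide
  by_cases h : m % 4 = 1 ∨ m % 4 = 2 <;> simp [expand, h, hne]

section Step

variable {a b : ℕ} (hab : a < b) (hD : b - a ∈ D)
  (hhalf : (a % 4 = 1 ∨ a % 4 = 2) ↔ (b % 4 = 1 ∨ b % 4 = 2))
include hab hD hhalf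

lemma odd_even_of_pos_eq (hpos : pos a = pos b) : a % 2 = 1 ∧ b % 2 = 0 := by
  unfold pos at hpos
  rcases D_eq_one_or_eq_two_or_four_dvd hD with h | h | h <;> omega

lemma even_of_even_of_step (ha : a % 2 = 0) : b % 2 = 0 := by
  rcases D_eq_one_or_eq_two_or_four_dvd hD with h | h | h <;> omega

end Step

lemma Nat.le_induction_lt {p : ℕ → Prop} {k : ℕ} (hstep : ∀ j, j + 1 < k → p j → p (j + 1))
    {i j : ℕ} (hij : i ≤ j) (hjk : j < k) (hi : p i) : p j := by
  induction j, hij using Nat.le_induction with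
  | base => exact hi
  | succ j _ ih => exact hstep j hjk (ih (by omega))

theorem stmt_12 (l k : ℕ) (s : ℕ → Fin 2) (x : ℕ → ℕ) (c d : Fin 2)
    (hdiff : IsDiffseqIn (4 * l) k x)
    (hmono : ∀ i < k, expand s (x i) = c)
    (hd : ∀ i < k, s (pos (x i)) = d) :
    ∀ j₁ j₂, j₁ + 1 < k → j₂ + 1 < k →
      pos (x j₁) = pos (x (j₁ + 1)) → pos (x j₂) = pos (x (j₂ + 1)) → j₁ = j₂ := by
  have hhalf : ∀ i < k, (x i % 4 = 1 ∨ x i % 4 = 2) ↔ c = d := fun i hi => by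
    rw [← expand_eq_iff, hmono i hi, hd i hi]
  have hstep : ∀ j, j + 1 < k → x j < x (j + 1) ∧ x (j + 1) - x j ∈ D ∧
      ((x j % 4 = 1 ∨ x j % 4 = 2) ↔ (x (j + 1) % 4 = 1 ∨ x (j + 1) % 4 = 2)) := fun j hj =>
    ⟨(hdiff.2 j hj).1, (hdiff.2 j hj).2, (hhalf j (by omega)).trans (hhalf (j + 1) hj).symm⟩
  have hbefore : ∀ j₁ j₂, j₁ < j₂ → j₂ + 1 < k → pos (x j₁) = pos (x (j₁ + 1)) →
      pos (x j₂) ≠ pos (x (j₂ + 1)) := by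
    intro j₁ j₂ hlt hj₂ hp₁ hp₂
    obtain ⟨hlt₁, hD₁, hhalf₁⟩ := hstep j₁ (by omega)
    obtain ⟨hlt₂, hD₂, hhalf₂⟩ := hstep j₂ hj₂
    have heven : x j₂ % 2 = 0 :=
      Nat.le_induction_lt (p := fun j => x j % 2 = 0)
        (fun j hj => even_of_even_of_step (hstep j hj).1 (hstep j hj).2.1 (hstep j hj).2.2)
        hlt (by omega) (odd_even_of_pos_eq hlt₁ hD₁ hhalf₁ hp₁).2
    have hodd := (odd_even_of_pos_eq hlt₂ hD₂ hhalf₂ hp₂).1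
    omega
  intro j₁ j₂ hj₁ hj₂ hp₁ hp₂
  rcases lt_trichotomy j₁ j₂ with h | h | h
  · exact absurd hp₂ (hbefore j₁ j₂ h hj₂ hp₁)
  · exact h
  · exact absurd hp₁ (hbefore j₂ j₁ h hj₁ hp₂)
end
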